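/- In the distance-fraud model, the joint probabilities G_i = Pr(D_i ∩ F_i) satisfy, for all 1 ≤ i ≤ n: G_i = (1/2)·G_{i−1} + (1/8)·Pr(D_{i−1}), with G_0 = 1; consequently G_i = (1/2)^i + (1/8)·Σ_{j=1}^{i} Pr(D_{j−1})·(1/2)^{i−j}. In particular G_1 = 5/8. -/

import Mathlib

/-!  The distance-fraud model of the paper.  Bits are elements of `ZMod 2`
(XOR is `+`, AND is `*`).  A sample point consists of the uniformly
distributed, mutually independent `n`-bit strings `Q, R⁰, R¹, c, c̃`
(key register, answer registers, verifier's challenges, malicious prover's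
random challenge guesses). -/

/-- Sample space: `(Q, R⁰, R¹, c, c̃)`. -/
abbrev DistΩ (n : ℕ) :=
  (Fin n → ZMod 2) × (Fin n → ZMod 2) × (Fin n → ZMod 2) ×
  (Fin n → ZMod 2) × (Fin n → ZMod 2)

namespace Dist

variable {n : ℕ}

def keyQ (ω : DistΩ n) : Fin n → ZMod 2 := ω.1
def reg0 (ω : DistΩ n) : Fin n → ZMod 2 := ω.2.1
def reg1 (ω : DistΩ n) : Fin n → ZMod 2 := ω.2.2.1
/-- `c`, the verifier's challenges. -/
def cVer (ω : DistΩ n) : Fin n → ZMod 2 := ω.2.2.2.1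
/-- `c̃`, the malicious prover's random challenge guesses. -/
def cGuess (ω : DistΩ n) : Fin n → ZMod 2 := ω.2.2.2.2

/-- `f_Q` applied to the length-`i` prefix of the challenge string `c`. -/
def fQ (Q c : Fin n → ZMod 2) (i : ℕ) : ZMod 2 :=
  ∑ j : Fin n, if (j : ℕ) < i then c j * Q j else 0

/-- `R_j^{b}`: the register bit selected by the bit `b` at round `j+1`. -/
def reg (ω : DistΩ n) (b : ZMod 2) (j : Fin n) : ZMod 2 :=
  if b = 0 then reg0 ω j else reg1 ω j

/-- The malicious prover's early reply at round `j+1`: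
`a = R_j^{c̃_j} ⊕ f_Q(C̃_j)`. -/
def ans (ω : DistΩ n) (j : Fin n) : ZMod 2 :=
  reg ω (cGuess ω j) j + fQ (keyQ ω) (cGuess ω) ((j : ℕ) + 1)

/-- The correct answer expected by the verifier at round `j+1`. -/
def corr (ω : DistΩ n) (j : Fin n) : ZMod 2 :=
  reg ω (cVer ω j) j + fQ (keyQ ω) (cVer ω) ((j : ℕ) + 1)

/-- `D_i`: the malicious prover wins the first `i` rounds (`D_0` is the sure
event). -/
def D (i : ℕ) (ω : DistΩ n) : Prop :=
  ∀ j : Fin n, (j : ℕ) < i → ans ω j = corr ω j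

/-- `F_i`: the running guess of `f_Q(C_i)` is correct (`F_0` is the sure
event). -/
def F (i : ℕ) (ω : DistΩ n) : Prop :=
  fQ (keyQ ω) (cGuess ω) i = fQ (keyQ ω) (cVer ω) i

open Classical in
/-- Probability of an event under the uniform distribution on `DistΩ n`. -/
noncomputable def pr (n : ℕ) (E : DistΩ n → Prop) : ℚ :=
  ((Finset.univ.filter E).card : ℚ) / ((Finset.univ : Finset (DistΩ n)).card : ℚ)

/-- Conditional probability `Pr(A | B)`. -/
noncomputable def cpr (n : ℕ) (A B : DistΩ n → Prop) : ℚ :=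
  pr n (fun ω => A ω ∧ B ω) / pr n B

end Dist

/-! Round `i` only involves the five bits `(q_i, R⁰_i, R¹_i, c_i, c̃_i)` at position `i`, which
are independent of everything that decides `D_{i-1}` and `F_{i-1}`; so on `D_{i-1}` one may
average over these 32 values. If the guess `f_Q(C̃_{i-1})` is right, round `i` is won with the
new guess right exactly when `c_i = c̃_i` (16 choices) or `c_i ≠ c̃_i`, `R⁰_i = R¹_i`, `q_i = 0`
(4 choices): probability `5/8`. If it is wrong, only `c_i ≠ c̃_i`, `R⁰_i = R¹_i`, `q_i = 1`
repair it (4 choices): probability `1/8`.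
Hence `G_i = 5/8·G_{i-1} + 1/8·(Pr D_{i-1} - G_{i-1})`, and the closed form is the
solution of this first-order linear recurrence. -/

open Finset

theorem sum_sum_set_eq_card_smul {α β M : Type*} [Fintype α] [Fintype β] [AddCommMonoid M]
    (get : α → β) (set : α → β → α) (get_set : ∀ a b, get (set a b) = b)
    (set_set : ∀ a b b', set (set a b) b' = set a b') (set_get : ∀ a, set a (get a) = a)
    (f : α → M) :
    ∑ a, ∑ b, f (set a b) = Fintype.card β • ∑ a, f a := by
  let swap : β × α ≃ β × α :=
    { toFun p := (get p.2, set p.2 p.1)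
      invFun p := (get p.2, set p.2 p.1)
      left_inv p := by simp [get_set, set_set, set_get]
      right_inv p := by simp [get_set, set_set, set_get] }
  calc ∑ a, ∑ b, f (set a b)
      = ∑ p : β × α, f (set p.2 p.1) := by rw [sum_comm, Fintype.sum_prod_type]
    _ = ∑ p : β × α, f p.2 := Fintype.sum_equiv swap _ _ fun _ => rfl
    _ = Fintype.card β • ∑ a, f a := by
        simp only [Fintype.sum_prod_type, sum_const, card_univ]

theorem linear_recurrence_closed_form {R : Type*} [CommSemiring R] {G p : ℕ → R} {a b : R}
    {n : ℕ} (h : ∀ i, 1 ≤ i → i ≤ n → G i = a * G (i - 1) + b * p (i - 1)) :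
    ∀ i ≤ n, G i = a ^ i * G 0 + b * ∑ j ∈ Icc 1 i, p (j - 1) * a ^ (i - j) := by
  intro i
  induction i with
  | zero => simp
  | succ i ih =>
    intro hi
    have shift : ∑ j ∈ Icc 1 i, p (j - 1) * a ^ (i + 1 - j)
        = a * ∑ j ∈ Icc 1 i, p (j - 1) * a ^ (i - j) := by
      rw [mul_sum]
      refine sum_congr rfl fun j hj => ?_
      rw [Nat.sub_add_comm (mem_Icc.mp hj).2, pow_succ]
      ring
    rw [h (i + 1) (by omega) hi, Nat.add_sub_cancel, ih (by omega),
      sum_Icc_succ_top (by omega), shift, Nat.add_sub_cancel, Nat.sub_self, pow_zero, pow_succ]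
    ring

namespace Dist

variable {n : ℕ}

abbrev Bits := ZMod 2 × ZMod 2 × ZMod 2 × ZMod 2 × ZMod 2

def bitsAt (k : Fin n) (ω : DistΩ n) : Bits :=
  (ω.1 k, ω.2.1 k, ω.2.2.1 k, ω.2.2.2.1 k, ω.2.2.2.2 k)

def setBits (k : Fin n) (ω : DistΩ n) (b : Bits) : DistΩ n :=
  (Function.update ω.1 k b.1, Function.update ω.2.1 k b.2.1,
   Function.update ω.2.2.1 k b.2.2.1, Function.update ω.2.2.2.1 k b.2.2.2.1,
   Function.update ω.2.2.2.2 k b.2.2.2.2)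

theorem sum_sum_setBits {M : Type*} [AddCommMonoid M] (k : Fin n) (f : DistΩ n → M) :
    ∑ ω, ∑ b, f (setBits k ω b) = 32 • ∑ ω, f ω :=
  sum_sum_set_eq_card_smul (bitsAt k) (setBits k) (fun _ _ => by simp [bitsAt, setBits])
    (fun _ _ _ => by simp [setBits]) (fun _ => by simp [bitsAt, setBits]) f

theorem fQ_update_of_le {Q c : Fin n → ZMod 2} {k : Fin n} {m : ℕ} (hm : m ≤ k) (x y : ZMod 2) :
    fQ (Function.update Q k x) (Function.update c k y) m = fQ Q c m := by
  refine sum_congr rfl fun j _ => ?_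
  split_ifs with hj
  · have hjk : j ≠ k := fun e => by subst e; omega
    simp [Function.update_of_ne hjk]
  · rfl

theorem fQ_succ (Q c : Fin n → ZMod 2) (k : Fin n) :
    fQ Q c (k + 1) = fQ Q c k + c k * Q k := by
  have split (j : Fin n) : (if (j : ℕ) < k + 1 then c j * Q j else 0)
      = (if (j : ℕ) < k then c j * Q j else 0) + (if j = k then c j * Q j else 0) := by
    rcases lt_trichotomy (j : ℕ) k with h | h | h
    · simp [h, Nat.lt_succ_of_lt h, Fin.ne_of_lt h]
    · simp [Fin.ext h]
    · simp [show ¬ (j : ℕ) < k + 1 by omega, h.not_gt, (Fin.ne_of_lt h).symm]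
  simp only [fQ, split, sum_add_distrib, sum_ite_eq', mem_univ, if_true]

/-- Round `k + 1` is won and ends with a correct guess, where `x = f_Q(C̃_k)`, `y = f_Q(C_k)`
and `(q, r₀, r₁, c, c̃)` are the bits of that round. -/
def RoundWon (x y : ZMod 2) : Bits → Prop
  | (q, r₀, r₁, c, c') =>
    (if c' = 0 then r₀ else r₁) + (x + c' * q) = (if c = 0 then r₀ else r₁) + (y + c * q) ∧
      x + c' * q = y + c * q

instance (x y : ZMod 2) : DecidablePred (RoundWon x y) :=
  fun (_, _, _, _, _) => inferInstanceAs (Decidable (_ ∧ _))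

theorem card_roundWon (x y : ZMod 2) :
    #{b | RoundWon x y b} = if x = y then 20 else 4 := by
  revert x y; decide

theorem D_setBits (k : Fin n) (ω : DistΩ n) (b : Bits) :
    D k (setBits k ω b) ↔ D k ω := by
  have hans {j : Fin n} (hj : j < k) : ans (setBits k ω b) j = ans ω j := by
    simp only [ans, reg, setBits, keyQ, cGuess, reg0, reg1, Function.update_of_ne (Fin.ne_of_lt hj)]
    rw [fQ_update_of_le hj]; rfl
  have hcorr {j : Fin n} (hj : j < k) : corr (setBits k ω b) j = corr ω j := by
    simp only [corr, reg, setBits, keyQ, cVer, reg0, reg1, Function.update_of_ne (Fin.ne_of_lt hj)]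
    rw [fQ_update_of_le hj]; rfl
  exact forall₂_congr fun j hj => by rw [hans hj, hcorr hj]

theorem D_succ (k : Fin n) (ω : DistΩ n) :
    D (k + 1) ω ↔ D k ω ∧ ans ω k = corr ω k := by
  refine ⟨fun h => ⟨fun j hj => h j (by omega), h k (by omega)⟩, fun ⟨hD, hk⟩ j hj => ?_⟩
  rcases Nat.lt_succ_iff_lt_or_eq.mp hj with hj | hj
  · exact hD j hj
  · exact Fin.ext hj ▸ hk

theorem D_succ_and_F_succ_setBits (k : Fin n) (ω : DistΩ n) (b : Bits) :
    D (k + 1) (setBits k ω b) ∧ F (k + 1) (setBits k ω b) ↔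
      D k ω ∧ RoundWon (fQ (keyQ ω) (cGuess ω) k) (fQ (keyQ ω) (cVer ω) k) b := by
  obtain ⟨q, r₀, r₁, c, c'⟩ := b
  simp only [D_succ, D_setBits, and_assoc, F, ans, corr, reg, fQ_succ]
  simp [setBits, keyQ, cVer, cGuess, reg0, reg1, fQ_update_of_le le_rfl, RoundWon]

open Classical in
theorem card_setBits_D_succ_and_F_succ (k : Fin n) (ω : DistΩ n) :
    #{b | D (k + 1) (setBits k ω b) ∧ F (k + 1) (setBits k ω b)}
      = if D k ω then (if F k ω then 20 else 4) else 0 := by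
  simp only [D_succ_and_F_succ_setBits]
  by_cases hD : D k ω
  · simp only [hD, true_and, if_true]
    convert card_roundWon _ _ using 2
    exact Iff.rfl
  · simp only [hD, false_and, filter_false, card_empty, if_false]

open Classical in
theorem card_D_succ_and_F_succ (k : Fin n) :
    32 * #{ω : DistΩ n | D (k + 1) ω ∧ F (k + 1) ω}
      = 4 * #{ω : DistΩ n | D k ω} + 16 * #{ω : DistΩ n | D k ω ∧ F k ω} := by
  calc 32 * #{ω : DistΩ n | D (k + 1) ω ∧ F (k + 1) ω}
      = ∑ ω, #{b | D (k + 1) (setBits k ω b) ∧ F (k + 1) (setBits k ω b)} := by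
        simp only [card_filter]
        exact (sum_sum_setBits k _).symm
    _ = ∑ ω : DistΩ n, if D k ω then (if F k ω then 20 else 4) else 0 :=
        sum_congr rfl fun ω _ => card_setBits_D_succ_and_F_succ k ω
    _ = ∑ ω : DistΩ n, (4 * (if D k ω then 1 else 0) + 16 * (if D k ω ∧ F k ω then 1 else 0)) :=
        sum_congr rfl fun ω _ => by split_ifs <;> simp_all
    _ = 4 * #{ω : DistΩ n | D k ω} + 16 * #{ω : DistΩ n | D k ω ∧ F k ω} := by
        simp only [sum_add_distrib, ← mul_sum, card_filter]

theorem pr_eq_card_div (E : DistΩ n → Prop) [DecidablePred E] :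
    pr n E = #(univ.filter E) / Fintype.card (DistΩ n) := by
  unfold pr
  congr

open Classical in
theorem pr_D_succ_and_F_succ (k : Fin n) :
    pr n (fun ω => D (k + 1) ω ∧ F (k + 1) ω)
      = 1 / 2 * pr n (fun ω => D k ω ∧ F k ω) + 1 / 8 * pr n (D k) := by
  have hcard : (32 : ℚ) * #{ω : DistΩ n | D (k + 1) ω ∧ F (k + 1) ω}
      = 4 * #(univ.filter (D (n := n) k)) + 16 * #{ω : DistΩ n | D k ω ∧ F k ω} := by
    exact_mod_cast card_D_succ_and_F_succ k
  simp only [pr_eq_card_div]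
  field_simp
  linarith

theorem pr_of_forall {E : DistΩ n → Prop} (h : ∀ ω, E ω) : pr n E = 1 := by
  simp [pr, h]

theorem D_zero (ω : DistΩ n) : D 0 ω := fun _ h => (Nat.not_lt_zero _ h).elim

theorem F_zero (ω : DistΩ n) : F 0 ω := by
  simp [F, fQ]

end Dist

open Dist in
/-- the joint probabilities `G_i = Pr(D_i ∩ F_i)` satisfy
`G_i = (1/2)·G_{i−1} + (1/8)·Pr(D_{i−1})` with `G_0 = 1`; consequently
`G_i = (1/2)^i + (1/8)·Σ_{j=1}^{i} Pr(D_{j−1})·(1/2)^{i−j}`, and in particular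
`G_1 = 5/8`. -/
theorem distance_fraud_joint_recursion (n : ℕ) :
    (∀ i, 1 ≤ i → i ≤ n →
      pr n (fun ω => D i ω ∧ F i ω)
        = (1 / 2) * pr n (fun ω => D (i - 1) ω ∧ F (i - 1) ω)
          + (1 / 8) * pr n (D (i - 1))) ∧
    pr n (fun ω => D 0 ω ∧ F 0 ω) = 1 ∧
    (∀ i, 1 ≤ i → i ≤ n →
      pr n (fun ω => D i ω ∧ F i ω)
        = (1 / 2) ^ i
          + (1 / 8) * ∑ j ∈ Finset.Icc 1 i,
              pr n (D (j - 1)) * (1 / 2) ^ (i - j)) ∧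
    (1 ≤ n → pr n (fun ω => D 1 ω ∧ F 1 ω) = 5 / 8) := by
  have recursion : ∀ i, 1 ≤ i → i ≤ n →
      pr n (fun ω => D i ω ∧ F i ω)
        = (1 / 2) * pr n (fun ω => D (i - 1) ω ∧ F (i - 1) ω) + (1 / 8) * pr n (D (i - 1)) := by
    intro i hi hin
    obtain ⟨k, rfl⟩ : ∃ k : Fin n, i = k + 1 := ⟨⟨i - 1, by omega⟩, (Nat.sub_add_cancel hi).symm⟩
    exact pr_D_succ_and_F_succ k
  have hG₀ : pr n (fun ω => D 0 ω ∧ F 0 ω) = 1 := pr_of_forall fun ω => ⟨D_zero ω, F_zero ω⟩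
  refine ⟨recursion, hG₀, fun i _ hin => ?_, fun hn => ?_⟩
  · simpa [hG₀] using linear_recurrence_closed_form (G := fun i => pr n fun ω => D i ω ∧ F i ω)
      (p := fun i => pr n (D i)) recursion i hin
  · rw [recursion 1 le_rfl hn, hG₀, pr_of_forall D_zero]
    norm_num
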